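/- arXiv:2502.01790 — 2 statements merged into one kernel-verified Lean document; each statement's English description precedes it below -/
import Mathlib

section
/- Every set functor F that preserves inverse images admits a greatest normal lax extension: a normal lax extension Λ of F such that Λ' r ≤ Λr for every normal lax extension Λ' of F and every relation r. -/
/-!
For any normal lax extension `Λ`, composing `Λ r` with the graphs of injections `i, j` and of
maps `p, q` shows: if `Λ r u v`, `u = F i u'`, `v = F j v'` and `p x = q y` whenever
`r (i x) (j y)`, then `F p u' = F q v'`. Taking this consequence as the definition of `Λ r`
gives the largest possible candidate. When `F` preserves inverse images it is itself a normal
lax extension: graphs and the identity are handled by lifting to a pullback, and for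
`Λ s · Λ r ≤ Λ (s · r)` the middle element is restricted to those points that have both an
`r`-predecessor and an `s`-successor, where a common value for `p` and `q` can be chosen.
-/

open CategoryTheory Function

universe u

/-- Applicative composition of relations: `relComp s r = s · r`. -/
def relComp {X Y Z : Type u} (s : Y → Z → Prop) (r : X → Y → Prop) : X → Z → Prop :=
  fun x z => ∃ y, r x y ∧ s y z

/-- Converse of a relation. -/
def relConv {X Y : Type u} (r : X → Y → Prop) : Y → X → Prop := fun y x => r x y

/-- Graph relation of a function. -/
def fgraph {X Y : Type u} (f : X → Y) : X → Y → Prop := fun x y => f x = y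

/-- An `F`-relator: a monotone assignment of relations `F X ⇸ F Y` to relations `X ⇸ Y`. -/
structure Relator (F : Type u ⥤ Type u) : Type (u + 1) where
  map : ∀ {X Y : Type u}, (X → Y → Prop) → (F.obj X → F.obj Y → Prop)
  mono : ∀ {X Y : Type u} {r s : X → Y → Prop}, (∀ x y, r x y → s x y) →
    ∀ u v, map r u v → map s u v

/-- `f` is a coalgebra homomorphism from `(X, α)` to `(Y, β)`. -/
def IsCoalgHom (F : Type u ⥤ Type u) {X Y : Type u} (α : X → F.obj X) (β : Y → F.obj Y)
    (f : X → Y) : Prop :=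
  ∀ x, β (f x) = F.map (TypeCat.ofHom f) (α x)

/-- Behavioural equivalence of states. -/
def BehEq (F : Type u ⥤ Type u) {X Y : Type u} (α : X → F.obj X) (β : Y → F.obj Y)
    (x : X) (y : Y) : Prop :=
  ∃ (Z : Type u) (γ : Z → F.obj Z) (f : X → Z) (g : Y → Z),
    IsCoalgHom F α γ f ∧ IsCoalgHom F β γ g ∧ f x = g y

/-- `r` is a `Λ`-simulation from `(X, α)` to `(Y, β)`: `r ≤ β° · Λr · α`. -/
def IsSimulation {F : Type u ⥤ Type u} (Λ : Relator F) {X Y : Type u}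
    (α : X → F.obj X) (β : Y → F.obj Y) (r : X → Y → Prop) : Prop :=
  ∀ x y, r x y → Λ.map r (α x) (β y)

/-- `x` and `y` are `Λ`-similar: related by some `Λ`-simulation. -/
def Similar' {F : Type u ⥤ Type u} (Λ : Relator F) {X Y : Type u}
    (α : X → F.obj X) (β : Y → F.obj Y) (x : X) (y : Y) : Prop :=
  ∃ r, IsSimulation Λ α β r ∧ r x y

/-- `Λ` is a relax extension of `F`: `Ff ≤ Λf` and `(Ff)° ≤ Λ(f°)` for all functions `f`. -/
def IsRelaxExtension (F : Type u ⥤ Type u) (Λ : Relator F) : Prop :=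
  ∀ {X Y : Type u} (f : X → Y),
    (∀ (u : F.obj X) (v : F.obj Y), F.map (TypeCat.ofHom f) u = v → Λ.map (fgraph f) u v) ∧
    (∀ (v : F.obj Y) (u : F.obj X), F.map (TypeCat.ofHom f) u = v → Λ.map (relConv (fgraph f)) v u)

/-- `Λ` is a lax extension of `F`: a relax extension with `Λs · Λr ≤ Λ(s · r)`. -/
def IsLaxExtension (F : Type u ⥤ Type u) (Λ : Relator F) : Prop :=
  IsRelaxExtension F Λ ∧
    ∀ {X Y Z : Type u} (r : X → Y → Prop) (s : Y → Z → Prop)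
      (u : F.obj X) (w : F.obj Z),
      relComp (Λ.map s) (Λ.map r) u w → Λ.map (relComp s r) u w

/-- `Λ` is normal: `Λ1_X = 1_{FX}` for every set `X`. -/
def IsNormal (F : Type u ⥤ Type u) (Λ : Relator F) : Prop :=
  ∀ (X : Type u) (u v : F.obj X), Λ.map (@Eq X) u v ↔ u = v

/-- The commutative square `f ∘ p = g ∘ q` is a pullback square (in `Set`). -/
def IsPullbackSq {P X B A : Type u} (p : P → X) (q : P → B) (f : X → A) (g : B → A) : Prop :=
  (∀ w, f (p w) = g (q w)) ∧ ∀ x b, f x = g b → ∃! w, p w = x ∧ q w = b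

/-- `F` preserves inverse images: it preserves every pullback of a cospan whose
second leg is injective. -/
def PreservesInverseImages (F : Type u ⥤ Type u) : Prop :=
  ∀ {P X B A : Type u} (p : P → X) (q : P → B) (f : X → A) (m : B → A),
    Function.Injective m → IsPullbackSq p q f m →
      IsPullbackSq (F.map (TypeCat.ofHom p)) (F.map (TypeCat.ofHom q)) (F.map (TypeCat.ofHom f))
        (F.map (TypeCat.ofHom m))

open TypeCat

lemma map_ofHom_comp_apply (F : Type u ⥤ Type u) {X Y Z : Type u} (f : X → Y) (g : Y → Z)
    (u : F.obj X) : F.map (↾fun x => g (f x)) u = F.map (↾g) (F.map (↾f) u) :=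
  F.map_comp_apply (↾f) (↾g) u

lemma map_ofHom_id_apply (F : Type u ⥤ Type u) {X : Type u} (u : F.obj X) :
    F.map (↾fun x : X => x) u = u :=
  F.map_id_apply X u

namespace PreservesInverseImages

variable {F : Type u ⥤ Type u}

theorem map_eq_map_of_compatible (h : PreservesInverseImages F) {X B A C : Type u}
    (f : X → A) {m : B → A} (hm : Injective m) {u : F.obj X} {b : F.obj B}
    (hub : F.map (↾f) u = F.map (↾m) b) {p : X → C} {q : B → C}
    (hpq : ∀ x b, f x = m b → p x = q b) : F.map (↾p) u = F.map (↾q) b := by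
  let P := {w : X × B // f w.1 = m w.2}
  have hsq : IsPullbackSq (fun w : P => w.1.1) (fun w : P => w.1.2) f m :=
    ⟨fun w => w.2, fun x b hxb => ⟨⟨(x, b), hxb⟩, ⟨rfl, rfl⟩, by rintro _ ⟨rfl, rfl⟩; rfl⟩⟩
  obtain ⟨w, ⟨rfl, rfl⟩, -⟩ := (h _ _ f m hm hsq).2 u b hub
  rw [← map_ofHom_comp_apply, ← map_ofHom_comp_apply]
  exact congrArg (fun k : P → C => F.map (↾k) w) (funext fun w => hpq _ _ w.2)

theorem exists_map_val_eq (h : PreservesInverseImages F) {Y W : Type u} (S : Set Y)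
    {v : F.obj Y} {w : F.obj W}
    (hvw : F.map (↾fun y => ULift.up.{u} (y ∈ S)) v = F.map (↾fun _ => ULift.up.{u} True) w) :
    ∃ v' : F.obj S, F.map (↾Subtype.val) v' = v := by
  have hsq : IsPullbackSq (Subtype.val : S → Y) (fun _ => PUnit.unit.{u + 1})
      (fun y => ULift.up.{u} (y ∈ S)) (fun _ => ULift.up.{u} True) :=
    ⟨fun y => congrArg ULift.up (eq_true y.2), fun y _ hy =>
      ⟨⟨y, of_eq_true (congrArg ULift.down hy)⟩, ⟨rfl, rfl⟩, fun y' hy' => Subtype.ext hy'.1⟩⟩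
  have hinj : Function.Injective fun _ : PUnit.{u + 1} => ULift.up.{u} True := fun _ _ _ => rfl
  obtain ⟨v', ⟨hv', -⟩, -⟩ := (h _ _ _ _ hinj hsq).2 v _
    (hvw.trans (map_ofHom_comp_apply F (fun _ => PUnit.unit) (fun _ => ULift.up.{u} True) w))
  exact ⟨v', hv'⟩

end PreservesInverseImages

def greatestNormalLax (F : Type u ⥤ Type u) : Relator F where
  map {X Y} r u v :=
    ∀ ⦃X' Y' C : Type u⦄ (i : X' → X) (j : Y' → Y), Injective i → Injective j →
      ∀ (u' : F.obj X') (v' : F.obj Y'), F.map (↾i) u' = u → F.map (↾j) v' = v →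
        ∀ (p : X' → C) (q : Y' → C), (∀ x y, r (i x) (j y) → p x = q y) →
          F.map (↾p) u' = F.map (↾q) v'
  mono hrs _ _ hr _ _ _ i j hi hj u' v' hu hv p q hpq :=
    hr i j hi hj u' v' hu hv p q fun x y hxy => hpq x y (hrs _ _ hxy)

section greatestNormalLax

variable {F : Type u ⥤ Type u} {X Y : Type u}

theorem greatestNormalLax_map_relConv {r : X → Y → Prop} {u : F.obj X} {v : F.obj Y}
    (hr : (greatestNormalLax F).map r u v) : (greatestNormalLax F).map (relConv r) v u :=
  fun _ _ _ j i hj hi v' u' hv hu q p hqp =>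
    (hr i j hi hj u' v' hu hv p q fun x y hxy => (hqp y x hxy).symm).symm

theorem greatestNormalLax_map_fgraph (h : PreservesInverseImages F) (f : X → Y) (u : F.obj X) :
    (greatestNormalLax F).map (fgraph f) u (F.map (↾f) u) := by
  rintro _ _ _ i j - hj u' v' rfl hv p q hpq
  refine h.map_eq_map_of_compatible (fun x => f (i x)) hj ?_ hpq
  rw [map_ofHom_comp_apply, hv]

theorem greatestNormalLax_isRelaxExtension (h : PreservesInverseImages F) :
    IsRelaxExtension F (greatestNormalLax F) := by
  intro X Y f
  refine ⟨?_, ?_⟩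
  · rintro u _ rfl
    exact greatestNormalLax_map_fgraph h f u
  · rintro _ u rfl
    exact greatestNormalLax_map_relConv (greatestNormalLax_map_fgraph h f u)

theorem greatestNormalLax_isNormal (h : PreservesInverseImages F) :
    IsNormal F (greatestNormalLax F) := by
  intro X u v
  constructor
  · intro huv
    simpa only [map_ofHom_id_apply] using huv _ _ injective_id injective_id u v
      (map_ofHom_id_apply F u) (map_ofHom_id_apply F v) (fun x => x) (fun x => x) fun _ _ => id
  · rintro rfl
    have hu := greatestNormalLax_map_fgraph h (fun x : X => x) u
    rwa [map_ofHom_id_apply] at hu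

theorem greatestNormalLax_exists_map_val_eq (h : PreservesInverseImages F) {X' Y' : Type u}
    {r : X → Y → Prop} {u : F.obj X} {v : F.obj Y} (hr : (greatestNormalLax F).map r u v)
    {i : X' → X} {j : Y' → Y} (hi : Injective i) (hj : Injective j) {u' : F.obj X'}
    {v' : F.obj Y'} (hu : F.map (↾i) u' = u) (hv : F.map (↾j) v' = v) :
    ∃ v₀ : F.obj {y // ∃ x, r (i x) (j y)}, F.map (↾Subtype.val) v₀ = v' :=
  h.exists_map_val_eq _ <| Eq.symm <| hr i j hi hj u' v' hu hv _ _ fun x _ hxy =>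
    congrArg ULift.up (eq_true ⟨x, hxy⟩).symm

theorem greatestNormalLax_map_relComp (h : PreservesInverseImages F) {Z : Type u}
    {r : X → Y → Prop} {s : Y → Z → Prop} {u : F.obj X} {v : F.obj Y} {w : F.obj Z}
    (hr : (greatestNormalLax F).map r u v) (hs : (greatestNormalLax F).map s v w) :
    (greatestNormalLax F).map (relComp s r) u w := by
  intro X' Z' C i k hi hk u' w' hu hw p q hpq
  obtain ⟨a, ha⟩ := greatestNormalLax_exists_map_val_eq h hr hi (j := fun y => y) injective_id hu
    (map_ofHom_id_apply F v)
  let Y₀ := {y : {y // ∃ x, r (i x) y} // ∃ z, s y.1 (k z)}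
  obtain ⟨v₀, hv₀⟩ : ∃ v₀ : F.obj Y₀, F.map (↾Subtype.val) v₀ = a :=
    greatestNormalLax_exists_map_val_eq h (greatestNormalLax_map_relConv hs) hk
      Subtype.val_injective hw ha
  let j : Y₀ → Y := fun y => y.1.1
  have hj : Injective j := Subtype.val_injective.comp Subtype.val_injective
  have hv : F.map (↾j) v₀ = v := by rw [map_ofHom_comp_apply, hv₀, ha]
  -- any two `p x`, `q z` around a point of `Y₀` coincide, so `q` of a chosen successor will do
  let m : Y₀ → C := fun y => q y.2.choose
  calc F.map (↾p) u' = F.map (↾m) v₀ :=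
        hr i j hi hj u' v₀ hu hv p m fun x y hxy => hpq x _ ⟨_, hxy, y.2.choose_spec⟩
    _ = F.map (↾q) w' := hs j k hj hk v₀ w' hv hw m q fun y z hyz =>
        (hpq _ _ ⟨_, y.1.2.choose_spec, y.2.choose_spec⟩).symm.trans
          (hpq _ _ ⟨_, y.1.2.choose_spec, hyz⟩)

theorem greatestNormalLax_isLaxExtension (h : PreservesInverseImages F) :
    IsLaxExtension F (greatestNormalLax F) :=
  ⟨greatestNormalLax_isRelaxExtension h, fun _ _ _ _ ⟨_, hr, hs⟩ =>
    greatestNormalLax_map_relComp h hr hs⟩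

end greatestNormalLax

namespace IsLaxExtension

variable {F : Type u ⥤ Type u} {Λ : Relator F} {X Y : Type u}

theorem map_relComp₃ (hΛ : IsLaxExtension F Λ) {W Z : Type u} {a : W → X → Prop}
    {r : X → Y → Prop} {b : Y → Z → Prop} {w : F.obj W} {u : F.obj X} {v : F.obj Y}
    {z : F.obj Z} (ha : Λ.map a w u) (hr : Λ.map r u v) (hb : Λ.map b v z) :
    Λ.map (relComp b (relComp r a)) w z :=
  hΛ.2 _ _ _ _ ⟨v, hΛ.2 _ _ _ _ ⟨u, ha, hr⟩, hb⟩

theorem map_comap (hΛ : IsLaxExtension F Λ) {X' Y' : Type u} {r : X → Y → Prop}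
    (f : X' → X) (g : Y' → Y) {u : F.obj X'} {v : F.obj Y'}
    (hr : Λ.map r (F.map (↾f) u) (F.map (↾g) v)) : Λ.map (fun x y => r (f x) (g y)) u v :=
  Λ.mono (by rintro x y ⟨_, ⟨_, rfl, hxy⟩, rfl⟩; exact hxy) u v
    (hΛ.map_relComp₃ ((hΛ.1 f).1 u _ rfl) hr ((hΛ.1 g).2 _ v rfl))

theorem map_eq_map_of_compatible (hΛ : IsLaxExtension F Λ) (hN : IsNormal F Λ) {C : Type u}
    {r : X → Y → Prop} {u : F.obj X} {v : F.obj Y} (hr : Λ.map r u v) {p : X → C} {q : Y → C}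
    (hpq : ∀ x y, r x y → p x = q y) : F.map (↾p) u = F.map (↾q) v :=
  (hN C _ _).1 <| Λ.mono (by rintro _ _ ⟨_, ⟨_, rfl, hxy⟩, rfl⟩; exact hpq _ _ hxy) _ _
    (hΛ.map_relComp₃ ((hΛ.1 p).2 _ u rfl) hr ((hΛ.1 q).1 v _ rfl))

theorem le_greatestNormalLax (hΛ : IsLaxExtension F Λ) (hN : IsNormal F Λ)
    {r : X → Y → Prop} {u : F.obj X} {v : F.obj Y} (hr : Λ.map r u v) :
    (greatestNormalLax F).map r u v := by
  rintro _ _ _ i j - - u' v' rfl rfl p q hpq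
  exact hΛ.map_eq_map_of_compatible hN (hΛ.map_comap i j hr) hpq

end IsLaxExtension

/-- Every set functor that preserves inverse images admits a
greatest normal lax extension. -/
theorem stmt12 (F : Type u ⥤ Type u) (h : PreservesInverseImages F) :
    ∃ Λ : Relator F, IsLaxExtension F Λ ∧ IsNormal F Λ ∧
      ∀ Λ' : Relator F, IsLaxExtension F Λ' → IsNormal F Λ' →
        ∀ {X Y : Type u} (r : X → Y → Prop) (u : F.obj X) (v : F.obj Y),
          Λ'.map r u v → Λ.map r u v :=
  ⟨greatestNormalLax F, greatestNormalLax_isLaxExtension h, greatestNormalLax_isNormal h,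
    fun _ hΛ hN _ _ _ _ _ => hΛ.le_greatestNormalLax hN⟩
end

section
/- Let F be a set functor that is ζ-bounded and preserves monomorphisms, and let Λ be a relational connector of F. If Λ-similarity is sound, then Λ is normal, i.e. Λ1_X = 1_{FX} for every set X. -/
open CategoryTheory Function

universe u

/-- `x` and `y` are `Λ`-similar: related by some `Λ`-simulation. -/
def LSimilar {F : Type u ⥤ Type u} (Λ : Relator F) {X Y : Type u}
    (α : X → F.obj X) (β : Y → F.obj Y) (x : X) (y : Y) : Prop :=
  ∃ r, IsSimulation Λ α β r ∧ r x y

/-- `Λ` is a relational connector: `1_{FX} ≤ Λ1_X` and `Λ(g° · r · f) = (Fg)° · Λr · Ff`. -/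
def IsRelConnector (F : Type u ⥤ Type u) (Λ : Relator F) : Prop :=
  (∀ (X : Type u) (u : F.obj X), Λ.map (@Eq X) u u) ∧
  (∀ {X Y A B : Type u} (r : X → Y → Prop) (f : A → X) (g : B → Y)
    (u : F.obj A) (v : F.obj B),
    Λ.map (fun a b => r (f a) (g b)) u v ↔ Λ.map r (F.map (TypeCat.ofHom f) u) (F.map (TypeCat.ofHom g) v))

/-- `(Z, γ)` is a terminal `F`-coalgebra. -/
def IsTerminalCoalg (F : Type u ⥤ Type u) {Z : Type u} (γ : Z → F.obj Z) : Prop :=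
  ∀ (X : Type u) (α : X → F.obj X), ∃! f : X → Z, IsCoalgHom F α γ f

/-- `F` is ζ-bounded: it admits a terminal coalgebra `(Z, γ)` and for every set `X`
and all `u, v ∈ FX` there are a set `A` of cardinality at most `|Z|` and an
injection `i : A → X` with `u, v` in the image of `Fi`. -/
def ZetaBounded (F : Type u ⥤ Type u) : Prop :=
  ∃ (Z : Type u) (γ : Z → F.obj Z), IsTerminalCoalg F γ ∧
    ∀ (X : Type u) (u v : F.obj X),
      ∃ (A : Type u) (i : A → X), Function.Injective i ∧
        (∃ e : A → Z, Function.Injective e) ∧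
        (∃ u' : F.obj A, F.map (TypeCat.ofHom i) u' = u) ∧ (∃ v' : F.obj A, F.map (TypeCat.ofHom i) v' = v)

/-- `Λ`-similarity is sound: `Λ`-similar states are behaviourally equivalent. -/
def Sound (F : Type u ⥤ Type u) (Λ : Relator F) : Prop :=
  ∀ {X Y : Type u} (α : X → F.obj X) (β : Y → F.obj Y) (x : X) (y : Y),
    LSimilar Λ α β x y → BehEq F α β x y

/-! A Λ-related pair `u, v ∈ FX` lives, by ζ-boundedness, in the image of `Fi` for an injection
`i : A → X` with `|A| ≤ |Z|`, and can be pushed along an injection `e : A → Z` into the terminal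
coalgebra `(Z, γ)`. There it becomes a Λ-related pair `u, v ∈ FZ`; adjoining to `(Z, γ)` two states
with successors `u` and `v` gives a coalgebra in which these states are Λ-similar, hence
behaviourally equivalent by soundness, hence identified in `Z`, which forces `u = v`. Since `F`
preserves monomorphisms, the original pair was equal as well. -/

section Coalgebra

variable {F : Type u ⥤ Type u}

theorem isCoalgHom_id {X : Type u} (α : X → F.obj X) : IsCoalgHom F α α id :=
  fun x => (Functor.map_id_apply F _ (α x)).symm

theorem IsCoalgHom.comp {X Y W : Type u} {α : X → F.obj X} {β : Y → F.obj Y} {δ : W → F.obj W}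
    {g : Y → W} {f : X → Y} (hg : IsCoalgHom F β δ g) (hf : IsCoalgHom F α β f) :
    IsCoalgHom F α δ (g ∘ f) := fun x => by
  rw [comp_apply, hg, hf]
  exact (Functor.map_comp_apply F (TypeCat.ofHom f) (TypeCat.ofHom g) (α x)).symm

theorem IsTerminalCoalg.eq_id_of_isCoalgHom {Z : Type u} {γ : Z → F.obj Z}
    (hγ : IsTerminalCoalg F γ) {f : Z → Z} (hf : IsCoalgHom F γ γ f) : f = id :=
  (hγ Z γ).unique hf (isCoalgHom_id γ)

theorem IsTerminalCoalg.apply_eq_of_behEq {Z X : Type u} {γ : Z → F.obj Z} {α : X → F.obj X}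
    (hγ : IsTerminalCoalg F γ) {t : X → Z} (ht : IsCoalgHom F α γ t) {x y : X}
    (hxy : BehEq F α α x y) : t x = t y := by
  obtain ⟨W, δ, f, g, hf, hg, hfg⟩ := hxy
  obtain ⟨s, hs, -⟩ := hγ W δ
  have hsf : s ∘ f = t := (hγ X α).unique (hs.comp hf) ht
  have hsg : s ∘ g = t := (hγ X α).unique (hs.comp hg) ht
  rw [← congrFun hsf x, ← congrFun hsg y, comp_apply, comp_apply, hfg]

def adjoinPair {Z : Type u} (γ : Z → F.obj Z) (u v : F.obj Z) :
    Z ⊕ ULift.{u} Bool → F.obj (Z ⊕ ULift.{u} Bool)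
  | .inl z => F.map (TypeCat.ofHom Sum.inl) (γ z)
  | .inr b => F.map (TypeCat.ofHom Sum.inl) (if b.down then u else v)

theorem isCoalgHom_inl_adjoinPair {Z : Type u} (γ : Z → F.obj Z) (u v : F.obj Z) :
    IsCoalgHom F γ (adjoinPair γ u v) Sum.inl := fun _ => rfl

theorem IsTerminalCoalg.apply_adjoinPair_inr {Z : Type u} {γ : Z → F.obj Z}
    (hγ : IsTerminalCoalg F γ) (u v : F.obj Z) {t : Z ⊕ ULift.{u} Bool → Z}
    (ht : IsCoalgHom F (adjoinPair γ u v) γ t) (b : Bool) :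
    γ (t (.inr ⟨b⟩)) = if b then u else v := by
  have hid : t ∘ Sum.inl = id :=
    hγ.eq_id_of_isCoalgHom (ht.comp (isCoalgHom_inl_adjoinPair γ u v))
  rw [ht, adjoinPair, ← Functor.map_comp_apply]
  change F.map (TypeCat.ofHom (t ∘ Sum.inl)) _ = _
  rw [hid]
  cases b <;> exact Functor.map_id_apply F _ _

end Coalgebra

namespace Relator

variable {F : Type u ⥤ Type u} {Λ : Relator F}

theorem map_eq_of_map_eq_map (hΛ : IsRelConnector F Λ) {A X : Type u} {i : A → X}
    (hi : Injective i) {u v : F.obj A}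
    (h : Λ.map (@Eq X) (F.map (TypeCat.ofHom i) u) (F.map (TypeCat.ofHom i) v)) :
    Λ.map (@Eq A) u v :=
  Λ.mono (fun _ _ hab => hi hab) u v ((hΛ.2 (@Eq X) i i u v).2 h)

theorem map_eq_map_of_map_eq (hΛ : IsRelConnector F Λ) {A X : Type u} (f : A → X)
    {u v : F.obj A} (h : Λ.map (@Eq A) u v) :
    Λ.map (@Eq X) (F.map (TypeCat.ofHom f) u) (F.map (TypeCat.ofHom f) v) :=
  (hΛ.2 (@Eq X) f f u v).1 (Λ.mono (fun _ _ hab => congrArg f hab) u v h)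

theorem isSimulation_adjoinPair (hΛ : IsRelConnector F Λ) {Z : Type u} (γ : Z → F.obj Z)
    {u v : F.obj Z} (huv : Λ.map (@Eq Z) u v) :
    IsSimulation Λ (adjoinPair γ u v) (adjoinPair γ u v)
      (fun x y => x = y ∨ (x = .inr ⟨true⟩ ∧ y = .inr ⟨false⟩)) := by
  rintro x y (rfl | ⟨rfl, rfl⟩)
  · exact Λ.mono (fun _ _ => Or.inl) _ _ (hΛ.1 _ _)
  · exact (hΛ.2 _ Sum.inl Sum.inl u v).1 (Λ.mono (fun _ _ hab => Or.inl (by rw [hab])) u v huv)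

theorem eq_of_map_eq_of_isTerminalCoalg (hΛ : IsRelConnector F Λ) (hsound : Sound F Λ)
    {Z : Type u} {γ : Z → F.obj Z} (hγ : IsTerminalCoalg F γ) {u v : F.obj Z}
    (huv : Λ.map (@Eq Z) u v) : u = v := by
  obtain ⟨t, ht, -⟩ := hγ _ (adjoinPair γ u v)
  have hbeh : BehEq F (adjoinPair γ u v) (adjoinPair γ u v) (.inr ⟨true⟩) (.inr ⟨false⟩) :=
    hsound _ _ _ _ ⟨_, isSimulation_adjoinPair hΛ γ huv, Or.inr ⟨rfl, rfl⟩⟩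
  have h := congrArg γ (hγ.apply_eq_of_behEq ht hbeh)
  rwa [hγ.apply_adjoinPair_inr u v ht, hγ.apply_adjoinPair_inr u v ht] at h

end Relator

/-- Let `F` be ζ-bounded and preserve monomorphisms, and let `Λ`
be a relational connector of `F`. If `Λ`-similarity is sound, then `Λ` is normal. -/
theorem stmt19 (F : Type u ⥤ Type u) (hzeta : ZetaBounded F)
    (hmono : ∀ {X Y : Type u} (f : X → Y),
      Function.Injective f → Function.Injective (F.map (TypeCat.ofHom f)))
    (Λ : Relator F) (hconn : IsRelConnector F Λ) (hsound : Sound F Λ) :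
    IsNormal F Λ := by
  intro X u v
  refine ⟨fun huv => ?_, fun huv => huv ▸ hconn.1 X u⟩
  obtain ⟨Z, γ, hγ, hbound⟩ := hzeta
  obtain ⟨A, i, hi, ⟨e, he⟩, ⟨u', rfl⟩, ⟨v', rfl⟩⟩ := hbound X u v
  have hA : Λ.map (@Eq A) u' v' := Relator.map_eq_of_map_eq_map hconn hi huv
  have hZ : F.map (TypeCat.ofHom e) u' = F.map (TypeCat.ofHom e) v' :=
    Relator.eq_of_map_eq_of_isTerminalCoalg hconn hsound hγ
      (Relator.map_eq_map_of_map_eq hconn e hA)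
  rw [hmono e he hZ]
end
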